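/- arXiv:2207.01689 — 2 statements merged into one kernel-verified Lean document; each statement's English description precedes it below -/
import Mathlib

section
/- The p-difference operator in y applied s times to Ψ₁ gives D_{y,p}^s Ψ₁(q^a,p^b;p^c,q^d;q,p,x,y) = [(q^a;q)_s (p^b;p)_s / ((1−p)^s (p^c;p)_s)]·Ψ₁(q^{a+s},p^{b+s};p^{c+s},q^d;q,p,x,y). -/
/-!
The series `Ψ₁` converges absolutely for `|x|, |y| < 1`: the numerators `(A;q)_n` converge to
`(A;q)_∞`, and the reciprocals of the denominators stay bounded, so the terms are dominated by
`M |x|^k |y|^ℓ`. Applying `D_{y,p}` termwise sends `y^(ℓ+1)` to `(1 - p^(ℓ+1))/(1 - p) · y^ℓ`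
and kills `ℓ = 0`; the factor `1 - p^(ℓ+1)` cancels the last factor of `(p;p)_{ℓ+1}`, and
`(z;q)_{n+1} = (1 - z) (qz;q)_n` turns the shifted series into `Ψ₁(qA, pB; pC, D)`.
Iterating `s` times gives the claim, with `q^s q^a = q^(a+s)`.
-/

open scoped BigOperators
open Filter

/-- q-shifted factorial `(z;q)_k`. -/
noncomputable def qPoch (q z : ℂ) (k : ℕ) : ℂ :=
  ∏ r ∈ Finset.range k, (1 - z * q ^ r)

/-- infinite q-shifted factorial `(z;q)_∞`. -/
noncomputable def qPochInf (q z : ℂ) : ℂ := ∏' r : ℕ, (1 - z * q ^ r)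

/-- bibasic Humbert function `Ψ₁(A,B;C,D;q,p,x,y)` with `A=qᵃ, B=pᵇ, C=pᶜ, D=q^d`. -/
noncomputable def Psi1 (q p A B C D x y : ℂ) : ℂ :=
  ∑' kl : ℕ × ℕ,
    qPoch q A (kl.1 + kl.2) * qPoch p B kl.2 /
      (qPoch p C kl.2 * qPoch q D kl.1 * qPoch q q kl.1 * qPoch p p kl.2) *
      x ^ kl.1 * y ^ kl.2

/-- bibasic Humbert function `Ψ₂(A;B,C;q,p,x,y)` with `A=qᵃ, B=pᵇ, C=qᶜ`. -/
noncomputable def Psi2 (q p A B C x y : ℂ) : ℂ :=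
  ∑' kl : ℕ × ℕ,
    qPoch q A (kl.1 + kl.2) /
      (qPoch p B kl.2 * qPoch q C kl.1 * qPoch q q kl.1 * qPoch p p kl.2) *
      x ^ kl.1 * y ^ kl.2

/-- the q-difference operator `D_{x,q}`. -/
noncomputable def qDiff (q : ℂ) (f : ℂ → ℂ) : ℂ → ℂ :=
  fun x => (f x - f (q * x)) / ((1 - q) * x)

/-- basic hypergeometric series `₂φ₁(A,B;C;q,x)`. -/
noncomputable def phi21 (q A B C x : ℂ) : ℂ :=
  ∑' k : ℕ, qPoch q A k * qPoch q B k / (qPoch q C k * qPoch q q k) * x ^ k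

/-- basic confluent hypergeometric series `₁φ₁(A;C;q,z)`. -/
noncomputable def phi11 (q A C z : ℂ) : ℂ :=
  ∑' k : ℕ, qPoch q A k / (qPoch q C k * qPoch q q k) *
    (-1) ^ k * q ^ (k * (k - 1) / 2) * z ^ k

open scoped Topology

section QPochhammer

variable {q : ℂ}

lemma summable_norm_mul_pow (hq : ‖q‖ < 1) (z : ℂ) : Summable fun r : ℕ => ‖-(z * q ^ r)‖ := by
  simpa [norm_neg, norm_mul, norm_pow] using
    (summable_geometric_of_lt_one (norm_nonneg q) hq).mul_left ‖z‖

lemma multipliable_one_sub_mul_pow (hq : ‖q‖ < 1) (z : ℂ) :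
    Multipliable fun r : ℕ => 1 - z * q ^ r := by
  simpa [sub_eq_add_neg] using multipliable_one_add_of_summable (summable_norm_mul_pow hq z)

lemma tendsto_qPoch (hq : ‖q‖ < 1) (z : ℂ) :
    Tendsto (qPoch q z) atTop (𝓝 (qPochInf q z)) :=
  (multipliable_one_sub_mul_pow hq z).tendsto_prod_tprod_nat

lemma qPochInf_ne_zero (hq : ‖q‖ < 1) {z : ℂ} (hz : ∀ r : ℕ, 1 - z * q ^ r ≠ 0) :
    qPochInf q z ≠ 0 := by
  simpa [qPochInf, sub_eq_add_neg] using
    tprod_one_add_ne_zero_of_summable (by simpa [sub_eq_add_neg] using hz)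
      (summable_norm_mul_pow hq z)

lemma exists_norm_qPoch_le (hq : ‖q‖ < 1) (z : ℂ) : ∃ M, ∀ n, ‖qPoch q z n‖ ≤ M := by
  obtain ⟨M, hM⟩ := (Metric.isBounded_range_of_tendsto _ (tendsto_qPoch hq z)).exists_norm_le
  exact ⟨M, fun n => hM _ ⟨n, rfl⟩⟩

/-- With `0⁻¹ = 0` this holds also when some factor `1 - z * q ^ r` vanishes: then all but finitely
many `qPoch q z n` are `0`. Otherwise the partial products tend to `qPochInf q z ≠ 0`. -/
lemma exists_norm_qPoch_inv_le (hq : ‖q‖ < 1) (z : ℂ) :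
    ∃ M, ∀ n, ‖(qPoch q z n)⁻¹‖ ≤ M := by
  by_cases hz : ∃ r : ℕ, 1 - z * q ^ r = 0
  · obtain ⟨r, hr⟩ := hz
    refine ⟨∑ n ∈ Finset.range (r + 1), ‖(qPoch q z n)⁻¹‖, fun n => ?_⟩
    rcases lt_or_ge n (r + 1) with hn | hn
    · exact Finset.single_le_sum (f := fun n => ‖(qPoch q z n)⁻¹‖)
        (fun _ _ => norm_nonneg _) (Finset.mem_range.2 hn)
    · rw [qPoch, Finset.prod_eq_zero (Finset.mem_range.2 hn) hr, inv_zero, norm_zero]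
      positivity
  · have := (tendsto_qPoch hq z).inv₀ (qPochInf_ne_zero hq (not_exists.1 hz))
    obtain ⟨M, hM⟩ := (Metric.isBounded_range_of_tendsto _ this).exists_norm_le
    exact ⟨M, fun n => hM _ ⟨n, rfl⟩⟩

lemma qPoch_succ (z : ℂ) (n : ℕ) : qPoch q z (n + 1) = qPoch q z n * (1 - z * q ^ n) :=
  Finset.prod_range_succ _ _

lemma qPoch_succ' (z : ℂ) (n : ℕ) : qPoch q z (n + 1) = (1 - z) * qPoch q (q * z) n := by
  rw [qPoch, Finset.prod_range_succ', qPoch, pow_zero, mul_one, mul_comm]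
  congr 1
  exact Finset.prod_congr rfl fun r _ => by ring

end QPochhammer

lemma qDiff_tsum_mul_pow {p y : ℂ} (c : ℕ × ℕ → ℂ) (hy : y ≠ 0)
    (h₁ : Summable fun kl : ℕ × ℕ => c kl * y ^ kl.2)
    (h₂ : Summable fun kl : ℕ × ℕ => c kl * (p * y) ^ kl.2) :
    qDiff p (fun t => ∑' kl : ℕ × ℕ, c kl * t ^ kl.2) y =
      ∑' kl : ℕ × ℕ, c (kl.1, kl.2 + 1) * ((1 - p ^ (kl.2 + 1)) / (1 - p)) * y ^ kl.2 := by
  have hshift : Function.Injective fun kl : ℕ × ℕ => (kl.1, kl.2 + 1) := by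
    rintro ⟨k, l⟩ ⟨k', l'⟩ h
    simpa using h
  rw [qDiff, ← h₁.tsum_sub h₂, ← tsum_div_const,
    ← hshift.tsum_eq (f := fun kl => (c kl * y ^ kl.2 - c kl * (p * y) ^ kl.2) / ((1 - p) * y))]
  · refine tsum_congr fun kl => ?_
    field_simp
    ring
  · rintro ⟨k, _ | l⟩ hkl
    · simp at hkl
    · exact ⟨(k, l), rfl⟩

noncomputable def psi1Coeff (q p A B C D x : ℂ) (kl : ℕ × ℕ) : ℂ :=
  qPoch q A (kl.1 + kl.2) * qPoch p B kl.2 /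
    (qPoch p C kl.2 * qPoch q D kl.1 * qPoch q q kl.1 * qPoch p p kl.2) * x ^ kl.1

lemma psi1_eq_tsum (q p A B C D x y : ℂ) :
    Psi1 q p A B C D x y = ∑' kl : ℕ × ℕ, psi1Coeff q p A B C D x kl * y ^ kl.2 :=
  rfl

section Psi1

variable {q p x : ℂ}

lemma norm_mul_lt_one {y : ℂ} (hp : ‖p‖ < 1) (hy : ‖y‖ < 1) : ‖p * y‖ < 1 :=
  (norm_mul_le p y).trans_lt (mul_lt_one_of_nonneg_of_lt_one_left (norm_nonneg p) hp hy.le)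

lemma summable_psi1Coeff_mul_pow (hq : ‖q‖ < 1) (hp : ‖p‖ < 1) (hx : ‖x‖ < 1)
    (A B C D : ℂ) {y : ℂ} (hy : ‖y‖ < 1) :
    Summable fun kl : ℕ × ℕ => psi1Coeff q p A B C D x kl * y ^ kl.2 := by
  obtain ⟨MA, hA⟩ := exists_norm_qPoch_le hq A
  obtain ⟨MB, hB⟩ := exists_norm_qPoch_le hp B
  obtain ⟨MC, hC⟩ := exists_norm_qPoch_inv_le hp C
  obtain ⟨MD, hD⟩ := exists_norm_qPoch_inv_le hq D
  obtain ⟨Mq, hQ⟩ := exists_norm_qPoch_inv_le hq q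
  obtain ⟨Mp, hP⟩ := exists_norm_qPoch_inv_le hp p
  have hgeom := (summable_geometric_of_lt_one (norm_nonneg x) hx).mul_of_nonneg
    (summable_geometric_of_lt_one (norm_nonneg y) hy)
    (fun _ => by positivity) (fun _ => by positivity)
  obtain ⟨hMA, hMB, hMC, hMD, hMq, hMp⟩ : 0 ≤ MA ∧ 0 ≤ MB ∧ 0 ≤ MC ∧ 0 ≤ MD ∧ 0 ≤ Mq ∧ 0 ≤ Mp :=
    ⟨(norm_nonneg _).trans (hA 0), (norm_nonneg _).trans (hB 0), (norm_nonneg _).trans (hC 0),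
      (norm_nonneg _).trans (hD 0), (norm_nonneg _).trans (hQ 0), (norm_nonneg _).trans (hP 0)⟩
  refine Summable.of_norm_bounded (hgeom.mul_left (MA * (MB * (MC * (MD * (Mq * Mp))))))
    fun ⟨k, l⟩ => ?_
  calc ‖psi1Coeff q p A B C D x (k, l) * y ^ l‖
      = ‖qPoch q A (k + l)‖ * (‖qPoch p B l‖ * (‖(qPoch p C l)⁻¹‖ * (‖(qPoch q D k)⁻¹‖ *
          (‖(qPoch q q k)⁻¹‖ * ‖(qPoch p p l)⁻¹‖)))) * (‖x‖ ^ k * ‖y‖ ^ l) := by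
        simp only [psi1Coeff, div_eq_mul_inv, mul_inv, norm_mul, norm_pow]
        ring
    _ ≤ _ := by gcongr; exacts [hA _, hB _, hC _, hD _, hQ _, hP _]

lemma psi1Coeff_succ_mul (hp : ‖p‖ < 1) (A B C D : ℂ) (k l : ℕ) :
    psi1Coeff q p A B C D x (k, l + 1) * ((1 - p ^ (l + 1)) / (1 - p)) =
      (1 - A) * (1 - B) / ((1 - p) * (1 - C)) *
        psi1Coeff q p (q * A) (p * B) (p * C) D x (k, l) := by
  have hpl : 1 - p ^ (l + 1) ≠ 0 := by
    refine sub_ne_zero.2 (Ne.symm (ne_of_apply_ne norm ?_))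
    rw [norm_pow, norm_one]
    exact (pow_lt_one₀ (norm_nonneg p) hp l.succ_ne_zero).ne
  rw [psi1Coeff, psi1Coeff, ← add_assoc, qPoch_succ' A, qPoch_succ' B, qPoch_succ' C,
    qPoch_succ p l, ← pow_succ']
  field_simp

lemma qDiff_psi1 (hq : ‖q‖ < 1) (hp : ‖p‖ < 1) (hx : ‖x‖ < 1) (A B C D : ℂ) {y : ℂ}
    (hy₀ : y ≠ 0) (hy : ‖y‖ < 1) :
    qDiff p (fun t => Psi1 q p A B C D x t) y =
      (1 - A) * (1 - B) / ((1 - p) * (1 - C)) * Psi1 q p (q * A) (p * B) (p * C) D x y := by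
  simp only [psi1_eq_tsum]
  rw [qDiff_tsum_mul_pow _ hy₀ (summable_psi1Coeff_mul_pow hq hp hx A B C D hy)
    (summable_psi1Coeff_mul_pow hq hp hx A B C D (norm_mul_lt_one hp hy)), ← tsum_mul_left]
  exact tsum_congr fun ⟨k, l⟩ => by rw [psi1Coeff_succ_mul hp, mul_assoc]

/-- The induction peels off the outermost `qDiff p`, which only samples the inner iterate at `y` and
`p * y`; both lie in the punctured unit disc, where the induction hypothesis applies. -/
lemma qDiff_iterate_psi1 (hq : ‖q‖ < 1) (hp₀ : p ≠ 0) (hp : ‖p‖ < 1) (hx : ‖x‖ < 1)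
    (A B C D : ℂ) (s : ℕ) {y : ℂ} (hy₀ : y ≠ 0) (hy : ‖y‖ < 1) :
    (qDiff p)^[s] (fun t => Psi1 q p A B C D x t) y =
      qPoch q A s * qPoch p B s / ((1 - p) ^ s * qPoch p C s) *
        Psi1 q p (q ^ s * A) (p ^ s * B) (p ^ s * C) D x y := by
  induction s generalizing y with
  | zero => simp [qPoch]
  | succ s ih =>
    rw [Function.iterate_succ_apply']
    calc qDiff p ((qDiff p)^[s] fun t => Psi1 q p A B C D x t) y
        = qPoch q A s * qPoch p B s / ((1 - p) ^ s * qPoch p C s) *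
            qDiff p (fun t => Psi1 q p (q ^ s * A) (p ^ s * B) (p ^ s * C) D x t) y := by
          simp only [qDiff, ih hy₀ hy, ih (mul_ne_zero hp₀ hy₀) (norm_mul_lt_one hp hy)]
          ring
      _ = _ := by
          rw [qDiff_psi1 hq hp hx _ _ _ _ hy₀ hy, ← mul_assoc, ← mul_assoc q, ← mul_assoc p,
            ← mul_assoc p, ← pow_succ', ← pow_succ', div_mul_div_comm, qPoch_succ, qPoch_succ,
            qPoch_succ]
          congr 2 <;> ring

end Psi1

theorem stmt8 (q p a b c d x y : ℂ) (s : ℕ)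
    (hq0 : 0 < ‖q‖) (hq1 : ‖q‖ < 1)
    (hp0 : 0 < ‖p‖) (hp1 : ‖p‖ < 1)
    (hx : ‖x‖ < 1) (hy : ‖y‖ < 1) (hy0 : y ≠ 0) :
    (qDiff p)^[s] (fun t => Psi1 q p (q ^ a) (p ^ b) (p ^ c) (q ^ d) x t) y =
      qPoch q (q ^ a) s * qPoch p (p ^ b) s / ((1 - p) ^ s * qPoch p (p ^ c) s) *
        Psi1 q p (q ^ (a + (s : ℂ))) (p ^ (b + (s : ℂ))) (p ^ (c + (s : ℂ)))
          (q ^ d) x y := by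
  have cpow_add_natCast {z : ℂ} (hz : 0 < ‖z‖) (e : ℂ) : z ^ (e + (s : ℂ)) = z ^ s * z ^ e := by
    rw [Complex.cpow_add _ _ (norm_pos_iff.1 hz), Complex.cpow_natCast, mul_comm]
  rw [cpow_add_natCast hq0, cpow_add_natCast hp0, cpow_add_natCast hp0]
  exact qDiff_iterate_psi1 hq1 (norm_pos_iff.1 hp0) hp1 hx _ _ _ _ s hy0 hy
end

section
/- For 0<|q|<1, 0<|p|<1, |x|<1, |y|<1: Ψ₁(q^a,p^b;p^c,q^d;q,p,x,y) = Σ_{ℓ≥0} [(q^a;q)_ℓ(p^b;p)_ℓ / ((p^c;p)_ℓ(p;p)_ℓ)]·y^ℓ · ₂φ₁(q^{a+ℓ},0;q^d;q,x), where ₂φ₁(q^α,0;q^γ;q,x) = Σ_{k≥0} (q^α;q)_k / ((q^γ;q)_k(q;q)_k) x^k. -/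
open scoped BigOperators
open Filter

/-!
Every factor `(z;q)_k` with `|q| < 1` is bounded, and so is its reciprocal: the partial products
of `∏ (1 - z q^r)` stay within `exp (|z|/(1-|q|)) - 1` of `1`, which for a tail `z q^N` with `N`
large keeps them away from `0`. Hence the terms of `Ψ₁` are dominated by `K |x|^k |y|^ℓ`, the
double series converges absolutely, and it may be summed over `k` first. The inner sum is a
`₂φ₁` because `(q^a;q)_{k+ℓ} = (q^a;q)_ℓ (q^{a+ℓ};q)_k`.
-/

open Finset Function Topology

lemma qPoch_add (q z : ℂ) (m n : ℕ) :
    qPoch q z (m + n) = qPoch q z m * qPoch q (z * q ^ m) n := by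
  rw [qPoch, prod_range_add]
  refine congrArg _ (prod_congr rfl fun r _ => ?_)
  rw [pow_add, mul_assoc]

lemma qPoch_zero_left (q : ℂ) (k : ℕ) : qPoch q 0 k = 1 := by
  simp [qPoch]

lemma norm_qPoch_sub_one_le {q : ℂ} (hq : ‖q‖ < 1) (z : ℂ) (k : ℕ) :
    ‖qPoch q z k - 1‖ ≤ Real.exp (‖z‖ / (1 - ‖q‖)) - 1 := by
  have hprod : qPoch q z k = ∏ r ∈ range k, (1 + -(z * q ^ r)) := by
    simp only [qPoch, sub_eq_add_neg]
  rw [hprod]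
  refine (norm_prod_one_add_sub_one_le _ _).trans (sub_le_sub_right (Real.exp_le_exp.2 ?_) _)
  simp only [norm_neg, norm_mul, norm_pow, ← mul_sum, ← mul_one_div ‖z‖]
  refine mul_le_mul_of_nonneg_left ?_ (norm_nonneg z)
  have := geom_sum_Ico_le_of_lt_one (m := 0) (n := k) (norm_nonneg q) hq
  rwa [← range_eq_Ico, pow_zero] at this

lemma norm_qPoch_le {q : ℂ} (hq : ‖q‖ < 1) (z : ℂ) (k : ℕ) :
    ‖qPoch q z k‖ ≤ Real.exp (‖z‖ / (1 - ‖q‖)) := by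
  have := norm_le_norm_sub_add (qPoch q z k) 1
  linarith [norm_qPoch_sub_one_le hq z k, norm_one (α := ℂ)]

lemma norm_inv_qPoch_le_of_lt_log_two {q : ℂ} (hq : ‖q‖ < 1) (z : ℂ) (k : ℕ)
    (hz : ‖z‖ / (1 - ‖q‖) < Real.log 2) :
    ‖(qPoch q z k)⁻¹‖ ≤ (2 - Real.exp (‖z‖ / (1 - ‖q‖)))⁻¹ := by
  have hpos : 0 < 2 - Real.exp (‖z‖ / (1 - ‖q‖)) := by
    rw [sub_pos, ← Real.exp_log two_pos]
    exact Real.exp_lt_exp.2 hz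
  have hlow : 2 - Real.exp (‖z‖ / (1 - ‖q‖)) ≤ ‖qPoch q z k‖ := by
    have := norm_sub_norm_le (1 : ℂ) (qPoch q z k)
    rw [norm_one, norm_sub_rev] at this
    linarith [norm_qPoch_sub_one_le hq z k]
  rw [norm_inv]
  exact inv_anti₀ hpos hlow

lemma exists_norm_inv_qPoch_le {q : ℂ} (hq : ‖q‖ < 1) (z : ℂ) :
    ∃ M, ∀ k, ‖(qPoch q z k)⁻¹‖ ≤ M := by
  have htail : Tendsto (fun N : ℕ => ‖z * q ^ N‖ / (1 - ‖q‖)) atTop (𝓝 0) := by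
    simpa [norm_mul, norm_pow] using
      ((tendsto_pow_atTop_nhds_zero_of_lt_one (norm_nonneg q) hq).const_mul ‖z‖).div_const
        (1 - ‖q‖)
  obtain ⟨N, hN⟩ := (htail.eventually (gt_mem_nhds (Real.log_pos one_lt_two))).exists
  set S := ∑ j ∈ range (N + 1), ‖(qPoch q z j)⁻¹‖
  set C := (2 - Real.exp (‖z * q ^ N‖ / (1 - ‖q‖)))⁻¹
  have hS (j : ℕ) (hj : j ≤ N) : ‖(qPoch q z j)⁻¹‖ ≤ S :=
    single_le_sum (f := fun j => ‖(qPoch q z j)⁻¹‖) (fun i _ => norm_nonneg _)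
      (mem_range.2 (Nat.lt_succ_of_le hj))
  refine ⟨max S (S * C), fun k => ?_⟩
  rcases le_total k N with hk | hk
  · exact (hS k hk).trans (le_max_left _ _)
  · obtain ⟨m, rfl⟩ := Nat.exists_eq_add_of_le hk
    rw [qPoch_add, mul_inv, norm_mul]
    refine le_trans ?_ (le_max_right _ _)
    exact mul_le_mul (hS N le_rfl) (norm_inv_qPoch_le_of_lt_log_two hq _ m hN)
      (norm_nonneg _) ((norm_nonneg _).trans (hS N le_rfl))

lemma summable_of_norm_le_mul_pow_mul_pow {E : Type*} [NormedAddCommGroup E] [CompleteSpace E]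
    {f : ℕ × ℕ → E} {K r s : ℝ}
    (hr₀ : 0 ≤ r) (hr : r < 1) (hs₀ : 0 ≤ s) (hs : s < 1)
    (hf : ∀ k l, ‖f (k, l)‖ ≤ K * r ^ k * s ^ l) : Summable f := by
  have hgeom : Summable fun kl : ℕ × ℕ => r ^ kl.1 * s ^ kl.2 :=
    (summable_geometric_of_lt_one hr₀ hr).mul_of_nonneg (summable_geometric_of_lt_one hs₀ hs)
      (fun _ => pow_nonneg hr₀ _) (fun _ => pow_nonneg hs₀ _)
  refine (hgeom.mul_left K).of_norm_bounded fun kl => ?_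
  rw [← mul_assoc]
  exact hf kl.1 kl.2

noncomputable def psi1Term (q p A B C D x y : ℂ) (k l : ℕ) : ℂ :=
  qPoch q A (k + l) * qPoch p B l / (qPoch p C l * qPoch q D k * qPoch q q k * qPoch p p l) *
    x ^ k * y ^ l

lemma summable_psi1Term {q p A B C D x y : ℂ} (hq : ‖q‖ < 1) (hp : ‖p‖ < 1)
    (hx : ‖x‖ < 1) (hy : ‖y‖ < 1) : Summable (uncurry (psi1Term q p A B C D x y)) := by
  have hA := norm_qPoch_le hq A
  have hB := norm_qPoch_le hp B
  set MA := Real.exp (‖A‖ / (1 - ‖q‖))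
  set MB := Real.exp (‖B‖ / (1 - ‖p‖))
  obtain ⟨MC, hC⟩ := exists_norm_inv_qPoch_le hp C
  obtain ⟨MD, hD⟩ := exists_norm_inv_qPoch_le hq D
  obtain ⟨MQ, hQ⟩ := exists_norm_inv_qPoch_le hq q
  obtain ⟨MP, hP⟩ := exists_norm_inv_qPoch_le hp p
  refine summable_of_norm_le_mul_pow_mul_pow (norm_nonneg x) hx (norm_nonneg y) hy
    (K := MA * MB * (MC * MD * MQ * MP)) fun k l => ?_
  have hMC : 0 ≤ MC := (norm_nonneg _).trans (hC 0)
  have hMD : 0 ≤ MD := (norm_nonneg _).trans (hD 0)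
  have hMQ : 0 ≤ MQ := (norm_nonneg _).trans (hQ 0)
  simp only [uncurry_apply_pair, psi1Term, div_eq_mul_inv, mul_inv, norm_mul, norm_pow]
  gcongr
  exacts [hA _, hB _, hC _, hD _, hQ _, hP _]

lemma tsum_psi1Term_eq_mul_phi21 (q p A B C D x y : ℂ) (l : ℕ) :
    ∑' k, psi1Term q p A B C D x y k l =
      qPoch q A l * qPoch p B l / (qPoch p C l * qPoch p p l) * y ^ l *
        phi21 q (A * q ^ l) 0 D x := by
  rw [phi21, ← tsum_mul_left]
  refine tsum_congr fun k => ?_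
  rw [psi1Term, add_comm k l, qPoch_add, qPoch_zero_left]
  ring

theorem stmt13_general (q p a b c d x y : ℂ)
    (hq0 : 0 < ‖q‖) (hq1 : ‖q‖ < 1)
    (hp1 : ‖p‖ < 1)
    (hx : ‖x‖ < 1) (hy : ‖y‖ < 1) :
    Psi1 q p (q ^ a) (p ^ b) (p ^ c) (q ^ d) x y =
      ∑' l : ℕ, qPoch q (q ^ a) l * qPoch p (p ^ b) l /
          (qPoch p (p ^ c) l * qPoch p p l) * y ^ l *
          phi21 q (q ^ (a + (l : ℂ))) 0 (q ^ d) x := by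
  have hshift (l : ℕ) : q ^ (a + (l : ℂ)) = q ^ a * q ^ l := by
    rw [Complex.cpow_add _ _ (norm_pos_iff.1 hq0), Complex.cpow_natCast]
  have hsum : Summable (uncurry (psi1Term q p (q ^ a) (p ^ b) (p ^ c) (q ^ d) x y)) :=
    summable_psi1Term hq1 hp1 hx hy
  calc Psi1 q p (q ^ a) (p ^ b) (p ^ c) (q ^ d) x y
      = ∑' (k) (l), psi1Term q p (q ^ a) (p ^ b) (p ^ c) (q ^ d) x y k l :=
        hsum.tsum_prod_uncurry hsum.prod_factor
    _ = ∑' (l) (k), psi1Term q p (q ^ a) (p ^ b) (p ^ c) (q ^ d) x y k l := hsum.tsum_comm.symm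
    _ = _ := tsum_congr fun l => by rw [tsum_psi1Term_eq_mul_phi21, hshift]

theorem stmt13 (q p a b c d x y : ℂ)
    (hq0 : 0 < ‖q‖) (hq1 : ‖q‖ < 1)
    (hp0 : 0 < ‖p‖) (hp1 : ‖p‖ < 1)
    (hx : ‖x‖ < 1) (hy : ‖y‖ < 1) :
    Psi1 q p (q ^ a) (p ^ b) (p ^ c) (q ^ d) x y =
      ∑' l : ℕ, qPoch q (q ^ a) l * qPoch p (p ^ b) l /
          (qPoch p (p ^ c) l * qPoch p p l) * y ^ l *
          phi21 q (q ^ (a + (l : ℂ))) 0 (q ^ d) x :=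
  stmt13_general q p a b c d x y hq0 hq1 hp1 hx hy
end
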